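/- For n ≥ 3, the polynomial ring C[u,v] is a free module over its subalgebra R = C[uv, u^n + v^n] with free basis {1, u, u^2, …, u^n, v, v^2, …, v^{n−1}} (a basis of 2n elements). -/

import Mathlib

/-!
Spanning: the `R`-span of the proposed basis contains `1` and is stable under multiplication by
`u` and `v`, because `vⁿ = (uⁿ + vⁿ) - uⁿ` and `uⁿ⁺¹ = (uⁿ + vⁿ) u - (uv) vⁿ⁻¹`.

Independence: grade `K[u,v]` by `ZMod n` with `deg u = 1`, `deg v = -1`. Then `R` lies in degree
`0` and every degree contains exactly two basis monomials, so an `R`-linear relation splits into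
relations `r x + s y = 0` between two basis monomials `x ≠ y`. The swap `σ : u ↔ v` fixes `r` and
`s`, and the system formed by the relation and its image under `σ` has determinant
`x σ(y) - y σ(x) ≠ 0`.
-/

open MvPolynomial

theorem eq_zero_of_mul_add_mul_eq_zero {A F : Type*} [CommRing A] [IsDomain A] [FunLike F A A]
    [RingHomClass F A A] (σ : F) {r s x y : A} (hr : σ r = r) (hs : σ s = s)
    (hxy : x * σ y ≠ y * σ x) (h : r * x + s * y = 0) : r = 0 := by
  have hσ : r * σ x + s * σ y = 0 := by simpa [hr, hs] using congrArg σ h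
  have hdet : r * (x * σ y - y * σ x) = 0 := by linear_combination σ y * h - y * hσ
  exact (mul_eq_zero.mp hdet).resolve_right (sub_ne_zero.mpr hxy)

theorem MvPolynomial.sum_ite_mul_eq_zero_of_isWeightedHomogeneous {σ R M ι : Type*}
    [CommSemiring R] [AddCommMonoid M] [DecidableEq M] [Fintype ι] {w : σ → M}
    {r b : ι → MvPolynomial σ R} {d : ι → M} (hr : ∀ i, IsWeightedHomogeneous w (r i) 0)
    (hb : ∀ i, IsWeightedHomogeneous w (b i) (d i)) (h : ∑ i, r i * b i = 0) (m : M) :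
    ∑ i, (if d i = m then r i else 0) * b i = 0 := by
  have hm := congrArg (weightedHomogeneousComponent w m) h
  rw [map_sum, map_zero] at hm
  refine (Finset.sum_congr rfl fun i _ => ?_).trans hm
  have hi : IsWeightedHomogeneous w (r i * b i) (d i) := by simpa using (hr i).mul (hb i)
  split_ifs with hdi
  · rw [← hdi, hi.weightedHomogeneousComponent_same]
  · rw [zero_mul, hi.weightedHomogeneousComponent_ne m (Ne.symm hdi)]

theorem Int.eq_or_eq_add_or_eq_sub_of_intCast_eq {n : ℕ} {a b : ℤ} (hab : (a : ZMod n) = b)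
    (ha : a ∈ Set.Ioc (-(n : ℤ)) n) (hb : b ∈ Set.Ioc (-(n : ℤ)) n) :
    a = b ∨ a = b + n ∨ a = b - n := by
  obtain ⟨k, hk⟩ := (ZMod.intCast_eq_intCast_iff_dvd_sub a b n).mp hab
  obtain ⟨ha₁, ha₂⟩ := ha
  obtain ⟨hb₁, hb₂⟩ := hb
  have hk₁ : -2 < k := by nlinarith
  have hk₂ : k < 2 := by nlinarith
  interval_cases k <;> omega

namespace DihedralInvariants

variable (K : Type*) [CommRing K] (n : ℕ)

noncomputable def subalgebra : Subalgebra K (MvPolynomial (Fin 2) K) :=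
  Algebra.adjoin K {X 0 * X 1, X 0 ^ n + X 1 ^ n}

noncomputable def basisFun : Fin (n + 1) ⊕ Fin (n - 1) → MvPolynomial (Fin 2) K :=
  Sum.elim (fun i => X 0 ^ (i : ℕ)) fun j => X 1 ^ ((j : ℕ) + 1)

/-- `basisFun K n e` is `u ^ shift n e` or `v ^ (-shift n e)`. -/
def shift : Fin (n + 1) ⊕ Fin (n - 1) → ℤ :=
  Sum.elim (fun i => (i : ℕ)) fun j => -((j : ℕ) + 1)

variable {K n}

lemma shift_injective : Function.Injective (shift n) := by
  rintro (i | j) (i' | j') h <;> simp only [shift, Sum.elim_inl, Sum.elim_inr] at h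
  · exact congrArg Sum.inl (Fin.ext (by omega))
  · omega
  · omega
  · exact congrArg Sum.inr (Fin.ext (by omega))

lemma shift_mem_Ioc (hn : 0 < n) (e : Fin (n + 1) ⊕ Fin (n - 1)) :
    shift n e ∈ Set.Ioc (-(n : ℤ)) n := by
  rcases e with i | j <;> simp only [shift, Sum.elim_inl, Sum.elim_inr, Set.mem_Ioc] <;> omega

lemma exists_shift_eq {k : ℤ} (hk : k ∈ Set.Ioc (-(n : ℤ)) n) : ∃ e, shift n e = k := by
  obtain ⟨hlo, hhi⟩ := hk
  rcases le_or_gt 0 k with h | h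
  · exact ⟨Sum.inl ⟨k.toNat, by omega⟩, by simp only [shift, Sum.elim_inl]; omega⟩
  · exact ⟨Sum.inr ⟨(-k).toNat - 1, by omega⟩, by simp only [shift, Sum.elim_inr]; omega⟩

lemma exists_partner (hn : 0 < n) (e₀ : Fin (n + 1) ⊕ Fin (n - 1)) :
    ∃ e₁, e₁ ≠ e₀ ∧ ∀ e, (shift n e : ZMod n) = shift n e₀ → e = e₀ ∨ e = e₁ := by
  have h₀ := shift_mem_Ioc hn e₀
  obtain ⟨e₁, he₁⟩ : ∃ e₁, shift n e₁ = shift n e₀ + n ∨ shift n e₁ = shift n e₀ - n := by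
    rcases le_or_gt (shift n e₀) 0 with h | h
    · exact (exists_shift_eq (by constructor <;> linarith [h₀.1])).imp fun _ => Or.inl
    · exact (exists_shift_eq (by constructor <;> linarith [h₀.2])).imp fun _ => Or.inr
  refine ⟨e₁, fun h => by subst h; omega, fun e he => ?_⟩
  have h₁ := shift_mem_Ioc hn e₁
  have h := shift_mem_Ioc hn e
  rcases Int.eq_or_eq_add_or_eq_sub_of_intCast_eq he h h₀ with h' | h' | h'
  · exact Or.inl (shift_injective h')
  all_goals
    refine Or.inr (shift_injective ?_)
    simp only [Set.mem_Ioc] at h h₀ h₁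
    omega

lemma isWeightedHomogeneous_basisFun {M : Type*} [AddCommGroupWithOne M]
    (e : Fin (n + 1) ⊕ Fin (n - 1)) :
    IsWeightedHomogeneous (![1, -1] : Fin 2 → M) (basisFun K n e) (shift n e) := by
  rcases e with i | j
  · simpa [basisFun, shift] using (isWeightedHomogeneous_X K (![1, -1] : Fin 2 → M) 0).pow i
  · simpa [basisFun, shift] using
      (isWeightedHomogeneous_X K (![1, -1] : Fin 2 → M) 1).pow ((j : ℕ) + 1)

lemma isWeightedHomogeneous_rename_swap_basisFun {M : Type*} [AddCommGroupWithOne M]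
    (e : Fin (n + 1) ⊕ Fin (n - 1)) :
    IsWeightedHomogeneous (![1, -1] : Fin 2 → M) (rename (Equiv.swap 0 1) (basisFun K n e))
      (-shift n e) := by
  rcases e with i | j
  · simpa [basisFun, shift] using (isWeightedHomogeneous_X K (![1, -1] : Fin 2 → M) 1).pow i
  · simpa [basisFun, shift] using
      (isWeightedHomogeneous_X K (![1, -1] : Fin 2 → M) 0).pow ((j : ℕ) + 1)

lemma basisFun_ne_zero [IsDomain K] (e : Fin (n + 1) ⊕ Fin (n - 1)) : basisFun K n e ≠ 0 := by
  rcases e with i | j <;> exact pow_ne_zero _ (X_ne_zero _)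

lemma basisFun_mul_rename_swap_ne [IsDomain K] {e e' : Fin (n + 1) ⊕ Fin (n - 1)} (he : e ≠ e') :
    basisFun K n e * rename (Equiv.swap 0 1) (basisFun K n e') ≠
      basisFun K n e' * rename (Equiv.swap 0 1) (basisFun K n e) := by
  intro h
  have hne : basisFun K n e * rename (Equiv.swap 0 1) (basisFun K n e') ≠ 0 :=
    mul_ne_zero (basisFun_ne_zero e)
      ((map_ne_zero_iff _ (rename_injective _ (Equiv.injective _))).mpr (basisFun_ne_zero e'))
  have hdeg := ((isWeightedHomogeneous_basisFun (M := ℤ) e).mul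
    (isWeightedHomogeneous_rename_swap_basisFun e')).inj_right hne
    (h ▸ (isWeightedHomogeneous_basisFun e').mul (isWeightedHomogeneous_rename_swap_basisFun e))
  rw [Int.cast_id, Int.cast_id] at hdeg
  exact he (shift_injective (by omega))

lemma rename_swap_eq_of_mem {r : MvPolynomial (Fin 2) K} (hr : r ∈ subalgebra K n) :
    rename (Equiv.swap 0 1) r = r := by
  have hle : subalgebra K n ≤ AlgHom.equalizer (rename (Equiv.swap 0 1)) (AlgHom.id K _) :=
    Algebra.adjoin_le (by rintro _ (rfl | rfl) <;> simp [mul_comm, add_comm])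
  exact hle hr

/-- Degree `0` for this grading is invariance under the rotation `u ↦ ξ u, v ↦ ξ⁻¹ v`. -/
lemma isWeightedHomogeneous_of_mem {r : MvPolynomial (Fin 2) K} (hr : r ∈ subalgebra K n) :
    IsWeightedHomogeneous (![1, -1] : Fin 2 → ZMod n) r 0 := by
  induction hr using Algebra.adjoin_induction with
  | mem x hx =>
    rcases hx with rfl | rfl
    · simpa using (isWeightedHomogeneous_X K (![1, -1] : Fin 2 → ZMod n) 0).mul
        (isWeightedHomogeneous_X K _ 1)
    · refine IsWeightedHomogeneous.add ?_ ?_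
      · simpa using (isWeightedHomogeneous_X K (![1, -1] : Fin 2 → ZMod n) 0).pow n
      · simpa using (isWeightedHomogeneous_X K (![1, -1] : Fin 2 → ZMod n) 1).pow n
  | algebraMap a => exact isWeightedHomogeneous_C _ a
  | add x y _ _ hx hy => exact hx.add hy
  | mul x y _ _ hx hy => simpa using hx.mul hy

theorem linearIndependent_basisFun [IsDomain K] (hn : 0 < n) :
    LinearIndependent (subalgebra K n) (basisFun K n) := by
  rw [Fintype.linearIndependent_iff]
  intro r hr e₀
  have hrel : ∑ e, (r e : MvPolynomial (Fin 2) K) * basisFun K n e = 0 := by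
    simpa only [Subalgebra.smul_def, smul_eq_mul] using hr
  have hfib := sum_ite_mul_eq_zero_of_isWeightedHomogeneous
    (fun e => isWeightedHomogeneous_of_mem (r e).2) isWeightedHomogeneous_basisFun hrel
    (shift n e₀ : ZMod n)
  obtain ⟨e₁, hne, hpartner⟩ := exists_partner hn e₀
  rw [Fintype.sum_eq_add e₀ e₁ hne.symm fun e he => by
    rw [if_neg fun h => (hpartner e h).elim he.1 he.2, zero_mul]] at hfib
  have hinv : ∀ e, rename (Equiv.swap 0 1)
      (if (shift n e : ZMod n) = shift n e₀ then (r e : MvPolynomial (Fin 2) K) else 0) =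
      if (shift n e : ZMod n) = shift n e₀ then (r e : MvPolynomial (Fin 2) K) else 0 := by
    intro e
    split_ifs
    exacts [rename_swap_eq_of_mem (r e).2, map_zero _]
  have h₀ := eq_zero_of_mul_add_mul_eq_zero _ (hinv e₀) (hinv e₁)
    (basisFun_mul_rename_swap_ne hne.symm) hfib
  rw [if_pos rfl] at h₀
  exact Subtype.ext h₀

lemma mul_mem_span {r x : MvPolynomial (Fin 2) K} (hr : r ∈ subalgebra K n)
    (hx : x ∈ Submodule.span (subalgebra K n) (Set.range (basisFun K n))) :
    r * x ∈ Submodule.span (subalgebra K n) (Set.range (basisFun K n)) := by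
  simpa only [Subalgebra.smul_def, smul_eq_mul] using
    Submodule.smul_mem _ (⟨r, hr⟩ : subalgebra K n) hx

lemma X_pow_mem_span {i : ℕ} (hi : i ≤ n) :
    X 0 ^ i ∈ Submodule.span (subalgebra K n) (Set.range (basisFun K n)) ∧
      X 1 ^ i ∈ Submodule.span (subalgebra K n) (Set.range (basisFun K n)) := by
  have hu : ∀ i ≤ n, X 0 ^ i ∈ Submodule.span (subalgebra K n) (Set.range (basisFun K n)) :=
    fun i hi => Submodule.subset_span ⟨Sum.inl ⟨i, by omega⟩, rfl⟩
  refine ⟨hu i hi, ?_⟩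
  rcases Nat.eq_zero_or_pos i with rfl | hi₀
  · simpa using hu 0 (Nat.zero_le _)
  rcases hi.lt_or_eq with hin | rfl
  · exact Submodule.subset_span ⟨Sum.inr ⟨i - 1, by omega⟩, by
      rw [basisFun, Sum.elim_inr, Nat.sub_add_cancel hi₀]⟩
  · have hq : X 0 ^ i + X 1 ^ i ∈ subalgebra K i := Algebra.subset_adjoin (by simp)
    convert Submodule.sub_mem _ (mul_mem_span hq (by simpa using hu 0 (Nat.zero_le _)))
      (hu i le_rfl) using 1
    ring

lemma basisFun_mul_X_mem_span (hn : 0 < n) (e : Fin (n + 1) ⊕ Fin (n - 1)) :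
    basisFun K n e * X 0 ∈ Submodule.span (subalgebra K n) (Set.range (basisFun K n)) ∧
      basisFun K n e * X 1 ∈ Submodule.span (subalgebra K n) (Set.range (basisFun K n)) := by
  have hp : X 0 * X 1 ∈ subalgebra K n := Algebra.subset_adjoin (by simp)
  have hq : X 0 ^ n + X 1 ^ n ∈ subalgebra K n := Algebra.subset_adjoin (by simp)
  rcases e with ⟨i, hi⟩ | ⟨j, hj⟩ <;> refine ⟨?_, ?_⟩
  · rcases Nat.lt_or_ge i n with hin | hin
    · simpa [basisFun, pow_succ] using (X_pow_mem_span (K := K) (i := i + 1) hin).1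
    · obtain rfl : i = n := by omega
      obtain ⟨m, rfl⟩ : ∃ m, i = m + 1 := ⟨i - 1, by omega⟩
      convert Submodule.sub_mem _ (mul_mem_span hq (X_pow_mem_span (i := 1) hn).1)
        (mul_mem_span hp (X_pow_mem_span (i := m) (by omega)).2) using 1
      simp only [basisFun, Sum.elim_inl]
      ring
  · rcases i with _ | i
    · simpa [basisFun] using (X_pow_mem_span (K := K) (i := 1) hn).2
    · convert mul_mem_span hp (X_pow_mem_span (i := i) (by omega)).1 using 1
      simp only [basisFun, Sum.elim_inl]
      ring
  · convert mul_mem_span hp (X_pow_mem_span (i := j) (by omega)).2 using 1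
    simp only [basisFun, Sum.elim_inr]
    ring
  · simpa [basisFun, pow_succ] using (X_pow_mem_span (K := K) (i := j + 2) (by omega)).2

theorem span_basisFun_eq_top (hn : 0 < n) :
    Submodule.span (subalgebra K n) (Set.range (basisFun K n)) = ⊤ := by
  set M := Submodule.span (subalgebra K n) (Set.range (basisFun K n))
  have hX : ∀ k, M ≤ M.comap (LinearMap.mulRight (subalgebra K n) (X k)) := by
    refine Fin.forall_fin_two.mpr ⟨?_, ?_⟩ <;> refine Submodule.span_le.mpr ?_ <;>
      rintro _ ⟨e, rfl⟩
    exacts [(basisFun_mul_X_mem_span hn e).1, (basisFun_mul_X_mem_span hn e).2]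
  refine Submodule.eq_top_iff'.mpr fun f => ?_
  induction f using MvPolynomial.induction_on with
  | C a =>
    simpa using mul_mem_span (algebraMap_mem (subalgebra K n) a) (X_pow_mem_span (i := 0) hn.le).1
  | add f g hf hg => exact M.add_mem hf hg
  | mul_X f k hf => exact hX k hf

end DihedralInvariants

theorem polynomial_free_over_dihedral_invariants (n : ℕ) (hn : 3 ≤ n) :
    ∃ B : Module.Basis (Fin (n + 1) ⊕ Fin (n - 1))
        ↥(Algebra.adjoin ℂ
            ({X 0 * X 1, X 0 ^ n + X 1 ^ n} : Set (MvPolynomial (Fin 2) ℂ)))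
        (MvPolynomial (Fin 2) ℂ),
      ⇑B = Sum.elim (fun i : Fin (n + 1) => (X 0 : MvPolynomial (Fin 2) ℂ) ^ (i : ℕ))
        (fun j : Fin (n - 1) => (X 1 : MvPolynomial (Fin 2) ℂ) ^ ((j : ℕ) + 1)) :=
  ⟨.mk (DihedralInvariants.linearIndependent_basisFun (by omega))
    (DihedralInvariants.span_basisFun_eq_top (by omega)).ge, Module.Basis.coe_mk _ _⟩
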